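/- arXiv:2202.07729 — 4 statements merged into one kernel-verified Lean document; each statement's English description precedes it below -/
import Mathlib

section
/- Let n ≥ 1, 0 < α < 1, M ≥ 0, and let B ⊂ ℝⁿ be the open unit ball. Suppose f : B → ℂ is differentiable with ‖Df(x)‖ ≤ M·(1 - |x|)^{α-1} for all x ∈ B. Then there is a constant C = C(n, α), independent of f and M, such that |f(x₀) - f(x₁)| ≤ C·M·|x₀ - x₁|^α for all x₀, x₁ ∈ B. -/
/-!
Write `d = ‖x₀ - x₁‖`. If `d < 1`, pull both points radially in to the sphere of radius
`r = 1 - d`: integrating the gradient bound along a radius costs `(M / α) d ^ α`, since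
`∫ from r to 1 of (1 - s) ^ (α - 1) ds = (1 - r) ^ α / α`; on the closed ball of radius `r` the
gradient is bounded by `M d ^ (α - 1)`, so the mean value theorem joins `r • x₀` to `r • x₁` at
cost `M d ^ (α - 1) · r d ≤ M d ^ α`. If `d ≥ 1`, pass through the centre instead.
-/

open Metric Set

section OneDim

variable {F : Type*} [NormedAddCommGroup F] [NormedSpace ℝ F]

theorem norm_sub_le_of_norm_deriv_le_one_sub_rpow {g g' : ℝ → F} {α M r : ℝ} (hα : 0 < α)
    (hr : r ≤ 1) (hg : ContinuousOn g (Icc r 1))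
    (hg' : ∀ s ∈ Ico r 1, HasDerivWithinAt g (g' s) (Ici s) s)
    (hbound : ∀ s ∈ Ico r 1, ‖g' s‖ ≤ M * (1 - s) ^ (α - 1)) :
    ‖g 1 - g r‖ ≤ M / α * (1 - r) ^ α := by
  set B : ℝ → ℝ := fun s => M / α * ((1 - r) ^ α - (1 - s) ^ α)
  have hB : ContinuousOn B (Icc r 1) := by fun_prop (disch := exact hα.le)
  have hB' : ∀ s ∈ Ico r 1, HasDerivWithinAt B (M * (1 - s) ^ (α - 1)) (Ici s) s := by
    intro s hs
    have hpow : HasDerivAt (fun s : ℝ => (1 - s) ^ α) (-1 * α * (1 - s) ^ (α - 1)) s :=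
      ((hasDerivAt_id' s).const_sub 1).rpow_const (Or.inl (sub_ne_zero.mpr hs.2.ne'))
    refine (((hasDerivAt_const s _).sub hpow).const_mul (M / α)).hasDerivWithinAt.congr_deriv ?_
    field_simp
    ring
  have := image_norm_le_of_norm_deriv_right_le_deriv_boundary' (hg.sub continuousOn_const)
    (fun s hs => (hg' s hs).sub_const (g r)) (by simp [B]) hB hB' hbound
    (right_mem_Icc.mpr hr)
  simpa [B, Real.zero_rpow hα.ne'] using this

end OneDim

section UnitBall

variable {E F : Type*} [NormedAddCommGroup E] [NormedSpace ℝ E] [NormedAddCommGroup F]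
  [NormedSpace ℝ F] {f : E → F} {α M : ℝ}

theorem norm_fderiv_le_of_norm_le (hα : α ≤ 1) (hM : 0 ≤ M)
    (hbound : ∀ x ∈ ball (0 : E) 1, ‖fderiv ℝ f x‖ ≤ M * (1 - ‖x‖) ^ (α - 1))
    {z : E} {t : ℝ} (hz : ‖z‖ ≤ t) (ht : t < 1) :
    ‖fderiv ℝ f z‖ ≤ M * (1 - t) ^ (α - 1) := by
  exact (hbound z (mem_ball_zero_iff.mpr (hz.trans_lt ht))).trans <| mul_le_mul_of_nonneg_left
    (Real.rpow_le_rpow_of_nonpos (by linarith) (by linarith) (by linarith)) hM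

theorem norm_sub_smul_le_of_norm_fderiv_le (hα₀ : 0 < α) (hα₁ : α ≤ 1) (hM : 0 ≤ M)
    (hdiff : ∀ x ∈ ball (0 : E) 1, DifferentiableAt ℝ f x)
    (hbound : ∀ x ∈ ball (0 : E) 1, ‖fderiv ℝ f x‖ ≤ M * (1 - ‖x‖) ^ (α - 1))
    {x : E} (hx : x ∈ ball (0 : E) 1) {r : ℝ} (hr₀ : 0 ≤ r) (hr₁ : r ≤ 1) :
    ‖f x - f (r • x)‖ ≤ M / α * (1 - r) ^ α := by
  have hx₁ : ‖x‖ < 1 := mem_ball_zero_iff.mp hx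
  have hnorm : ∀ s ∈ Icc r 1, ‖s • x‖ = s * ‖x‖ := fun s hs => by
    rw [norm_smul, Real.norm_of_nonneg (hr₀.trans hs.1)]
  have hderiv : ∀ s ∈ Icc r 1, HasDerivAt (fun s : ℝ => f (s • x)) (fderiv ℝ f (s • x) x) s := by
    intro s hs
    have hsx : ‖s • x‖ < 1 := by
      rw [hnorm s hs]
      exact mul_lt_one_of_nonneg_of_lt_one_right hs.2 (norm_nonneg x) hx₁
    exact (hdiff _ (mem_ball_zero_iff.mpr hsx)).hasFDerivAt.comp_hasDerivAt s
      (by simpa using (hasDerivAt_id s).smul_const x)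
  have hbound' : ∀ s ∈ Ico r 1, ‖fderiv ℝ f (s • x) x‖ ≤ M * (1 - s) ^ (α - 1) := by
    intro s hs
    have hsx : ‖s • x‖ ≤ s := by
      rw [hnorm s (Ico_subset_Icc_self hs)]
      exact mul_le_of_le_one_right (hr₀.trans hs.1) hx₁.le
    calc ‖fderiv ℝ f (s • x) x‖ ≤ ‖fderiv ℝ f (s • x)‖ * 1 :=
          (fderiv ℝ f (s • x)).le_opNorm_of_le hx₁.le
      _ ≤ M * (1 - s) ^ (α - 1) := by
          rw [mul_one]; exact norm_fderiv_le_of_norm_le hα₁ hM hbound hsx hs.2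
  simpa using norm_sub_le_of_norm_deriv_le_one_sub_rpow hα₀ hr₁
    (fun s hs => (hderiv s hs).continuousAt.continuousWithinAt)
    (fun s hs => (hderiv s (Ico_subset_Icc_self hs)).hasDerivWithinAt) hbound'

theorem norm_smul_sub_smul_le_of_norm_fderiv_le (hα : α ≤ 1) (hM : 0 ≤ M)
    (hdiff : ∀ x ∈ ball (0 : E) 1, DifferentiableAt ℝ f x)
    (hbound : ∀ x ∈ ball (0 : E) 1, ‖fderiv ℝ f x‖ ≤ M * (1 - ‖x‖) ^ (α - 1))
    {x₀ x₁ : E} (hx₀ : x₀ ∈ ball (0 : E) 1) (hx₁ : x₁ ∈ ball (0 : E) 1) {r : ℝ}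
    (hr₀ : 0 ≤ r) (hr₁ : r < 1) :
    ‖f (r • x₀) - f (r • x₁)‖ ≤ M * (1 - r) ^ (α - 1) * (r * ‖x₀ - x₁‖) := by
  have hmem : ∀ x ∈ ball (0 : E) 1, r • x ∈ closedBall (0 : E) r := fun x hx => by
    rw [mem_closedBall_zero_iff, norm_smul, Real.norm_of_nonneg hr₀]
    exact mul_le_of_le_one_right hr₀ (mem_ball_zero_iff.mp hx).le
  have hsub : closedBall (0 : E) r ⊆ ball 0 1 := closedBall_subset_ball hr₁
  have := (convex_closedBall (0 : E) r).norm_image_sub_le_of_norm_fderiv_le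
    (fun z hz => hdiff z (hsub hz))
    (fun z hz => norm_fderiv_le_of_norm_le hα hM hbound (mem_closedBall_zero_iff.mp hz) hr₁)
    (hmem x₁ hx₁) (hmem x₀ hx₀)
  rwa [← smul_sub, norm_smul, Real.norm_of_nonneg hr₀] at this

theorem norm_sub_le_two_mul_div_of_norm_fderiv_le (hα₀ : 0 < α) (hα₁ : α ≤ 1) (hM : 0 ≤ M)
    (hdiff : ∀ x ∈ ball (0 : E) 1, DifferentiableAt ℝ f x)
    (hbound : ∀ x ∈ ball (0 : E) 1, ‖fderiv ℝ f x‖ ≤ M * (1 - ‖x‖) ^ (α - 1))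
    {x₀ x₁ : E} (hx₀ : x₀ ∈ ball (0 : E) 1) (hx₁ : x₁ ∈ ball (0 : E) 1) :
    ‖f x₀ - f x₁‖ ≤ 2 * (M / α) := by
  have hcentre : ∀ x ∈ ball (0 : E) 1, ‖f x - f 0‖ ≤ M / α := fun x hx => by
    simpa using norm_sub_smul_le_of_norm_fderiv_le hα₀ hα₁ hM hdiff hbound hx le_rfl zero_le_one
  calc ‖f x₀ - f x₁‖ ≤ ‖f x₀ - f 0‖ + ‖f x₁ - f 0‖ := by
        simpa only [norm_sub_rev (f 0)] using norm_sub_le_norm_sub_add_norm_sub (f x₀) (f 0) (f x₁)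
    _ ≤ 2 * (M / α) := by linarith [hcentre x₀ hx₀, hcentre x₁ hx₁]

theorem norm_sub_le_mul_rpow_of_norm_fderiv_le (hα₀ : 0 < α) (hα₁ : α ≤ 1) (hM : 0 ≤ M)
    (hdiff : ∀ x ∈ ball (0 : E) 1, DifferentiableAt ℝ f x)
    (hbound : ∀ x ∈ ball (0 : E) 1, ‖fderiv ℝ f x‖ ≤ M * (1 - ‖x‖) ^ (α - 1))
    {x₀ x₁ : E} (hx₀ : x₀ ∈ ball (0 : E) 1) (hx₁ : x₁ ∈ ball (0 : E) 1) :
    ‖f x₀ - f x₁‖ ≤ (1 + 2 / α) * M * ‖x₀ - x₁‖ ^ α := by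
  rcases eq_or_ne x₀ x₁ with rfl | hne
  · simp [Real.zero_rpow hα₀.ne']
  set d := ‖x₀ - x₁‖
  have hd : 0 < d := norm_pos_iff.mpr (sub_ne_zero.mpr hne)
  have hMα : 0 ≤ M / α := div_nonneg hM hα₀.le
  rcases le_or_gt 1 d with hd₁ | hd₁
  · have hdα : 1 ≤ d ^ α := Real.one_le_rpow hd₁ hα₀.le
    have hfar := norm_sub_le_two_mul_div_of_norm_fderiv_le hα₀ hα₁ hM hdiff hbound hx₀ hx₁
    calc ‖f x₀ - f x₁‖ ≤ 2 * (M / α) := hfar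
      _ ≤ (1 + 2 / α) * M * d ^ α := by
          rw [add_mul, add_mul, div_mul_eq_mul_div, mul_div_assoc]; nlinarith
  · have hr₀ : 0 ≤ 1 - d := by linarith
    have h₀ := norm_sub_smul_le_of_norm_fderiv_le hα₀ hα₁ hM hdiff hbound hx₀ hr₀ (by linarith)
    have h₁ := norm_sub_smul_le_of_norm_fderiv_le hα₀ hα₁ hM hdiff hbound hx₁ hr₀ (by linarith)
    have hc := norm_smul_sub_smul_le_of_norm_fderiv_le hα₁ hM hdiff hbound hx₀ hx₁ hr₀
      (by linarith)
    rw [sub_sub_cancel] at h₀ h₁ hc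
    have hmid : M * d ^ (α - 1) * ((1 - d) * d) ≤ M * d ^ α := by
      rw [Real.rpow_sub_one hd.ne']
      field_simp
      nlinarith [Real.rpow_pos_of_pos hd α]
    calc ‖f x₀ - f x₁‖
        ≤ ‖f x₀ - f ((1 - d) • x₀)‖ + ‖f ((1 - d) • x₀) - f ((1 - d) • x₁)‖
          + ‖f x₁ - f ((1 - d) • x₁)‖ := by
          rw [norm_sub_rev (f x₁)]
          exact (norm_sub_le_norm_sub_add_norm_sub _ _ _).trans
            (add_le_add_left (norm_sub_le_norm_sub_add_norm_sub _ _ _) _)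
      _ ≤ M / α * d ^ α + M * d ^ α + M / α * d ^ α := by gcongr; exact hc.trans hmid
      _ = (1 + 2 / α) * M * d ^ α := by ring

end UnitBall

theorem stmt7_general (n : ℕ) (α : ℝ) (hα0 : 0 < α) (hα1 : α < 1) :
    ∃ C : ℝ, 0 < C ∧ ∀ (M : ℝ), 0 ≤ M →
      ∀ f : EuclideanSpace ℝ (Fin n) → ℂ,
        (∀ x ∈ ball (0 : EuclideanSpace ℝ (Fin n)) 1, DifferentiableAt ℝ f x) →
        (∀ x ∈ ball (0 : EuclideanSpace ℝ (Fin n)) 1,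
          ‖fderiv ℝ f x‖ ≤ M * (1 - ‖x‖) ^ (α - 1)) →
        ∀ x₀ ∈ ball (0 : EuclideanSpace ℝ (Fin n)) 1,
          ∀ x₁ ∈ ball (0 : EuclideanSpace ℝ (Fin n)) 1,
            ‖f x₀ - f x₁‖ ≤ C * M * ‖x₀ - x₁‖ ^ α :=
  ⟨1 + 2 / α, by positivity, fun _ hM _ hdiff hbound _ hx₀ _ hx₁ =>
    norm_sub_le_mul_rpow_of_norm_fderiv_le hα0 hα1.le hM hdiff hbound hx₀ hx₁⟩

/-- Hardy–Littlewood lemma on the unit ball: a gradient blow-up bound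
`‖Df(x)‖ ≤ M(1-|x|)^{α-1}` implies `α`-Hölder continuity, with a constant depending
only on `n` and `α`. -/
theorem stmt7 (n : ℕ) (hn : 1 ≤ n) (α : ℝ) (hα0 : 0 < α) (hα1 : α < 1) :
    ∃ C : ℝ, 0 < C ∧ ∀ (M : ℝ), 0 ≤ M →
      ∀ f : EuclideanSpace ℝ (Fin n) → ℂ,
        (∀ x ∈ ball (0 : EuclideanSpace ℝ (Fin n)) 1, DifferentiableAt ℝ f x) →
        (∀ x ∈ ball (0 : EuclideanSpace ℝ (Fin n)) 1,
          ‖fderiv ℝ f x‖ ≤ M * (1 - ‖x‖) ^ (α - 1)) →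
        ∀ x₀ ∈ ball (0 : EuclideanSpace ℝ (Fin n)) 1,
          ∀ x₁ ∈ ball (0 : EuclideanSpace ℝ (Fin n)) 1,
            ‖f x₀ - f x₁‖ ≤ C * M * ‖x₀ - x₁‖ ^ α :=
  stmt7_general n α hα0 hα1
end

section
/- Let Ω ⊆ ℝⁿ be a bounded convex open set, x₀ ∈ Ω with d₀ := dist(x₀, Ωᶜ) > 0, and let α < 0, M ≥ 0. Suppose f : Ω → ℂ is differentiable with ‖Df(z)‖ ≤ M·dist(z, Ωᶜ)^{α-1} for all z ∈ Ω. Then there exists a constant C depending only on α, d₀, and diam(Ω) such that |f(z)| ≤ |f(x₀)| + C·M·dist(z, Ωᶜ)^α for all z ∈ Ω. -/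
/-
Let `d = dist(z, Ωᶜ)`, `d₀ = dist(x₀, Ωᶜ)` and `L ≥ |z - x₀|`. Since `Ω` is convex, the distance to
`Ωᶜ` is concave on `Ω`, so on the segment `w(s) = (1 - s) z + s x₀` it is at least
`(1 - s) d + s d₀`. As the distance is `1`-Lipschitz, `d ≤ d₀ + L`, and this lower bound dominates
`κ (d + s d₀)` with `κ = d₀ / (2 d₀ + L)`. Hence `s ↦ f (w s)` has derivative at most
`M L κ^(α-1) (d + s d₀)^(α-1)`, whose integral over `[0, 1]` is at most
`M L κ^(α-1) d^α / (-α d₀)`. The constant only involves `α`, `d₀` and `L = diam Ω`.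
-/

open Metric Set

theorem norm_sub_le_of_norm_deriv_le_rpow {F : Type*} [NormedAddCommGroup F] [NormedSpace ℝ F]
    {φ φ' : ℝ → F} {K c d α : ℝ} (hK : 0 ≤ K) (hc : 0 < c) (hd : 0 < d) (hα : α < 0)
    (hφ : ∀ s ∈ Icc (0 : ℝ) 1, HasDerivAt φ (φ' s) s)
    (hφ' : ∀ s ∈ Icc (0 : ℝ) 1, ‖φ' s‖ ≤ K * (d + s * c) ^ (α - 1)) :
    ‖φ 1 - φ 0‖ ≤ K * d ^ α / (-α * c) := by
  -- an antiderivative of the bound, vanishing at `0`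
  set B : ℝ → ℝ := fun s => K / (α * c) * ((d + s * c) ^ α - d ^ α)
  have hB : ∀ s ∈ Icc (0 : ℝ) 1, HasDerivAt B (K * (d + s * c) ^ (α - 1)) s := by
    intro s hs
    have hpos : 0 < d + s * c := by nlinarith [hs.1]
    refine ((((hasDerivAt_id' s).mul_const c).const_add d).rpow_const (p := α)
      (Or.inl hpos.ne') |>.sub_const (d ^ α) |>.const_mul (K / (α * c))).congr_deriv ?_
    field_simp [hα.ne, hc.ne']
  have fence := image_norm_le_of_norm_deriv_right_le_deriv_boundary' (f := fun s => φ s - φ 0)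
    (fun s hs => ((hφ s hs).sub_const _).continuousAt.continuousWithinAt)
    (fun s hs => ((hφ s (Ico_subset_Icc_self hs)).sub_const _).hasDerivWithinAt)
    (by simp [B]) (fun s hs => (hB s hs).continuousAt.continuousWithinAt)
    (fun s hs => (hB s (Ico_subset_Icc_self hs)).hasDerivWithinAt)
    (fun s hs => hφ' s (Ico_subset_Icc_self hs)) (right_mem_Icc.2 zero_le_one)
  calc ‖φ 1 - φ 0‖ ≤ B 1 := fence
    _ = K / (-α * c) * (d ^ α - (d + c) ^ α) := by simp only [B, one_mul, neg_mul, div_neg]; ring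
    _ ≤ K / (-α * c) * d ^ α := by
      have : 0 < -α * c := mul_pos (neg_pos.2 hα) hc
      gcongr
      exact sub_le_self _ (by positivity)
    _ = K * d ^ α / (-α * c) := by ring

section

variable {E : Type*} [NormedAddCommGroup E] [NormedSpace ℝ E] {Ω : Set E} {x z : E} {L : ℝ}

theorem Convex.concaveOn_infDist_compl (hΩ : Convex ℝ Ω) :
    ConcaveOn ℝ Ω fun x => infDist x Ωᶜ := by
  refine ⟨hΩ, fun x hx y hy a b ha hb hab => ?_⟩
  simp only [smul_eq_mul]
  set r := a * infDist x Ωᶜ + b * infDist y Ωᶜ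
  rcases Ωᶜ.eq_empty_or_nonempty with h | hne
  · simp [r, h]
  refine (le_infDist hne).2 fun w hw => ?_
  by_contra! hlt
  have hr : 0 < r := dist_nonneg.trans_lt hlt
  set u := w - (a • x + b • y)
  -- moving `x` and `y` by the multiples of `u` proportional to their distances to `Ωᶜ` keeps them
  -- in `Ω`, and moves their convex combination to `w`
  have shift : ∀ p ∈ Ω, p + (infDist p Ωᶜ / r) • u ∈ Ω := by
    intro p hp
    rcases (infDist_nonneg (x := p) (s := Ωᶜ)).eq_or_lt with h | h
    · simpa [← h] using hp
    · refine notMem_compl_iff.1 (notMem_of_dist_lt_infDist (x := p) ?_)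
      rw [dist_self_add_right, norm_smul, Real.norm_of_nonneg (by positivity)]
      calc infDist p Ωᶜ / r * ‖u‖ < infDist p Ωᶜ / r * r := by
            gcongr; rwa [← dist_eq_norm']
        _ = _ := div_mul_cancel₀ _ hr.ne'
  have hw' : w = a • (x + (infDist x Ωᶜ / r) • u) + b • (y + (infDist y Ωᶜ / r) • u) := by
    have : a * infDist x Ωᶜ / r + b * infDist y Ωᶜ / r = 1 := by
      rw [← add_div, div_self hr.ne']
    calc w = a • x + b • y + (1 : ℝ) • u := by simp [u]
      _ = _ := by rw [← this]; module
  exact hw (hw' ▸ hΩ (shift x hx) (shift y hy) ha hb hab)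

theorem Convex.mul_add_le_infDist_compl_lineMap (hΩ : Convex ℝ Ω) (hx : x ∈ Ω) (hz : z ∈ Ω)
    (hL : dist z x ≤ L) (hx₀ : 0 < infDist x Ωᶜ) {s : ℝ} (hs : s ∈ Icc (0 : ℝ) 1) :
    infDist x Ωᶜ / (2 * infDist x Ωᶜ + L) * (infDist z Ωᶜ + s * infDist x Ωᶜ)
      ≤ infDist (AffineMap.lineMap z x s) Ωᶜ := by
  set d₀ := infDist x Ωᶜ
  set d := infDist z Ωᶜ
  have hconc : (1 - s) * d + s * d₀ ≤ infDist (AffineMap.lineMap z x s) Ωᶜ := by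
    simpa [AffineMap.lineMap_apply_module] using
      hΩ.concaveOn_infDist_compl.2 hz hx (sub_nonneg.2 hs.2) hs.1 (sub_add_cancel 1 s)
  have hlip : d ≤ d₀ + L := infDist_le_infDist_add_dist.trans (by gcongr)
  have hd : 0 ≤ d := infDist_nonneg
  refine le_trans ?_ hconc
  rw [div_mul_eq_mul_div, div_le_iff₀ (by linarith [dist_nonneg.trans hL])]
  nlinarith [mul_nonneg hs.1 (mul_nonneg hx₀.le (sub_nonneg.2 hlip)),
    mul_nonneg (sub_nonneg.2 hs.2) (mul_nonneg hd (dist_nonneg.trans hL)),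
    mul_nonneg (sub_nonneg.2 hs.2) (mul_nonneg hd hx₀.le)]

theorem Convex.norm_sub_le_of_norm_fderiv_le_infDist_compl_rpow {F : Type*}
    [NormedAddCommGroup F] [NormedSpace ℝ F] {f : E → F} {M α : ℝ} (hΩ : Convex ℝ Ω)
    (hx : x ∈ Ω) (hz : z ∈ Ω) (hL : dist z x ≤ L) (hx₀ : 0 < infDist x Ωᶜ)
    (hz₀ : 0 < infDist z Ωᶜ) (hM : 0 ≤ M) (hα : α < 0)
    (hf : ∀ w ∈ Ω, DifferentiableAt ℝ f w)
    (hf' : ∀ w ∈ Ω, ‖fderiv ℝ f w‖ ≤ M * infDist w Ωᶜ ^ (α - 1)) :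
    ‖f x - f z‖ ≤ M * L * (infDist x Ωᶜ / (2 * infDist x Ωᶜ + L)) ^ (α - 1) *
      infDist z Ωᶜ ^ α / (-α * infDist x Ωᶜ) := by
  set κ := infDist x Ωᶜ / (2 * infDist x Ωᶜ + L)
  have hL₀ : 0 ≤ L := dist_nonneg.trans hL
  have hκ : 0 < κ := by positivity
  have hmem : ∀ s ∈ Icc (0 : ℝ) 1, AffineMap.lineMap z x s ∈ Ω := fun _ => hΩ.lineMap_mem hz hx
  have bound : ∀ s ∈ Icc (0 : ℝ) 1, ‖fderiv ℝ f (AffineMap.lineMap z x s) (x - z)‖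
      ≤ M * L * κ ^ (α - 1) * (infDist z Ωᶜ + s * infDist x Ωᶜ) ^ (α - 1) := fun s hs =>
    have hpos : 0 < infDist z Ωᶜ + s * infDist x Ωᶜ := by nlinarith [hs.1]
    calc ‖fderiv ℝ f (AffineMap.lineMap z x s) (x - z)‖
        ≤ ‖fderiv ℝ f (AffineMap.lineMap z x s)‖ * ‖x - z‖ := ContinuousLinearMap.le_opNorm _ _
      _ ≤ M * infDist (AffineMap.lineMap z x s) Ωᶜ ^ (α - 1) * L :=
        mul_le_mul (hf' _ (hmem s hs)) (by rwa [← dist_eq_norm']) (norm_nonneg _)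
          (mul_nonneg hM (Real.rpow_nonneg infDist_nonneg _))
      _ ≤ M * (κ * (infDist z Ωᶜ + s * infDist x Ωᶜ)) ^ (α - 1) * L := by
        gcongr M * ?_ * L
        exact Real.rpow_le_rpow_of_nonpos (by positivity)
          (hΩ.mul_add_le_infDist_compl_lineMap hx hz hL hx₀ hs) (by linarith)
      _ = _ := by rw [Real.mul_rpow hκ.le hpos.le]; ring
  simpa using norm_sub_le_of_norm_deriv_le_rpow (φ := fun s => f (AffineMap.lineMap z x s))
    (by positivity) hx₀ hz₀ hα
    (fun s hs => (hf _ (hmem s hs)).hasFDerivAt.comp_hasDerivAt s AffineMap.hasDerivAt_lineMap)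
    bound

end

/-- Negative-order Hardy–Littlewood bound on a bounded convex open set: if
`‖Df(z)‖ ≤ M·dist(z,Ωᶜ)^{α-1}` with `α < 0`, then
`|f(z)| ≤ |f(x₀)| + C·M·dist(z,Ωᶜ)^α`, where `C` depends only on `α`,
`d₀ = dist(x₀,Ωᶜ)` and `diam Ω`. -/
theorem stmt8 {n : ℕ} (α : ℝ) (hα : α < 0) (d₀ D : ℝ) (hd₀ : 0 < d₀) :
    ∃ C : ℝ, ∀ (Ω : Set (EuclideanSpace ℝ (Fin n))) (x₀ : EuclideanSpace ℝ (Fin n))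
      (M : ℝ) (f : EuclideanSpace ℝ (Fin n) → ℂ),
      IsOpen Ω → Convex ℝ Ω → Bornology.IsBounded Ω →
      x₀ ∈ Ω → Metric.infDist x₀ Ωᶜ = d₀ → Metric.diam Ω = D → 0 ≤ M →
      (∀ z ∈ Ω, DifferentiableAt ℝ f z) →
      (∀ z ∈ Ω, ‖fderiv ℝ f z‖ ≤ M * Metric.infDist z Ωᶜ ^ (α - 1)) →
      ∀ z ∈ Ω, ‖f z‖ ≤ ‖f x₀‖ + C * M * Metric.infDist z Ωᶜ ^ α := by
  refine ⟨D * (d₀ / (2 * d₀ + D)) ^ (α - 1) / (-α * d₀), ?_⟩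
  rintro Ω x₀ M f hopen hconv hbdd hx₀ hd₀x₀ hD hM hf hf' z hz
  have hne : Ωᶜ.Nonempty := nonempty_iff_ne_empty.2 fun h => by simp [h] at hd₀x₀; linarith
  have hz₀ : 0 < infDist z Ωᶜ :=
    (hopen.isClosed_compl.notMem_iff_infDist_pos hne).1 (notMem_compl_iff.2 hz)
  have key := hconv.norm_sub_le_of_norm_fderiv_le_infDist_compl_rpow hx₀ hz
    (hD ▸ dist_le_diam_of_mem hbdd hz hx₀) (hd₀x₀ ▸ hd₀) hz₀ hM hα hf hf'
  rw [hd₀x₀] at key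
  calc ‖f z‖ ≤ ‖f x₀‖ + ‖f x₀ - f z‖ := by
        simpa only [norm_sub_rev] using norm_le_norm_add_norm_sub' (f z) (f x₀)
    _ ≤ ‖f x₀‖ + M * D * (d₀ / (2 * d₀ + D)) ^ (α - 1) * infDist z Ωᶜ ^ α / (-α * d₀) := by
        gcongr
    _ = _ := by ring
end

section
/- Let m ≥ 1, a₁,…,a_m ∈ ℝ and b₁,…,b_m > 0 satisfy Σ_{j=1}^m a_j·b_j·(-b_j)^k = -1 for k = 0, 1, 2, 3. Let B = max_j b_j, R > 0, K ≥ 0, and let ψ : [-B·R, R] → ℂ be four times continuously differentiable with |ψ⁗(s)| ≤ K for all s. Then for every ρ ∈ [0, R], | ψ(ρ) + Σ_{j=1}^m a_j·b_j·ψ(-b_j·ρ) | ≤ (1/24)·(1 + Σ_{j=1}^m |a_j|·b_j^5)·K·ρ⁴. -/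
/-!
Expand `ψ` to third order at `0` within `[-BR, R]`. Applied to the Taylor polynomial, the moment
conditions say exactly that `P(ρ) + Σ a_j b_j P(-b_j ρ)` vanishes coefficient by coefficient, so only
the remainders survive, each bounded by the sharp Lagrange estimate `K |x|⁴ / 4!`. Mathlib's
`taylor_mean_remainder_bound` loses a factor `n + 1` and expands only at the left endpoint; the sharp
form comes from comparing `t ↦ P_t(x)` with the boundary function `C ((x - x₀)ⁿ⁺¹ - (x - t)ⁿ⁺¹) / (n+1)!`,
and expansions to the left follow by reflecting `f` through `t ↦ -t`.
-/

open Set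

open scoped Nat Pointwise

section Taylor

variable {E : Type*} [NormedAddCommGroup E] [NormedSpace ℝ E]

theorem norm_sub_taylorWithinEval_le_of_le {f : ℝ → E} {a b C x₀ x : ℝ} {n : ℕ} (hab : a < b)
    (hf : ContDiffOn ℝ (n + 1) f (Icc a b)) (hx₀ : a ≤ x₀) (hx₀x : x₀ ≤ x) (hx : x ≤ b)
    (hC : ∀ y ∈ Icc a b, ‖iteratedDerivWithin (n + 1) f (Icc a b) y‖ ≤ C) :
    ‖f x - taylorWithinEval f n (Icc a b) x₀ x‖ ≤ C * (x - x₀) ^ (n + 1) / (n + 1)! := by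
  have hsub : Icc x₀ x ⊆ Icc a b := Icc_subset_Icc hx₀ hx
  have hf' : DifferentiableOn ℝ (iteratedDerivWithin n f (Icc a b)) (Icc a b) :=
    hf.differentiableOn_iteratedDerivWithin (mod_cast n.lt_succ_self) (uniqueDiffOn_Icc hab)
  set F : ℝ → E := fun t => taylorWithinEval f n (Icc a b) t x
  have hF : ∀ t ∈ Icc x₀ x, HasDerivWithinAt F
      (((n ! : ℝ)⁻¹ * (x - t) ^ n) • iteratedDerivWithin (n + 1) f (Icc a b) t) (Icc x₀ x) t :=
    fun t ht => (hasDerivWithinAt_taylorWithinEval_at_Icc x hab (hsub ht) hf.of_succ hf').mono hsub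
  have hderiv_le : ∀ t ∈ Ico x₀ x,
      ‖((n ! : ℝ)⁻¹ * (x - t) ^ n) • iteratedDerivWithin (n + 1) f (Icc a b) t‖
        ≤ C * (x - t) ^ n / n ! := by
    intro t ht
    have hxt : 0 ≤ x - t := sub_nonneg.2 ht.2.le
    rw [norm_smul, Real.norm_of_nonneg (by positivity)]
    calc _ ≤ (n ! : ℝ)⁻¹ * (x - t) ^ n * C := by gcongr; exact hC t (hsub (Ico_subset_Icc_self ht))
      _ = C * (x - t) ^ n / n ! := by ring
  have hboundary : ∀ t, HasDerivAt (fun t => C * ((x - x₀) ^ (n + 1) - (x - t) ^ (n + 1)) / (n + 1)!)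
      (C * (x - t) ^ n / n !) t := by
    intro t
    refine ((((hasDerivAt_const t _).sub (monomial_has_deriv_aux t x n)).const_mul C).div_const
      ((n + 1)! : ℝ)).congr_deriv ?_
    push_cast [Nat.factorial_succ]
    field_simp
    ring
  have key := image_norm_le_of_norm_deriv_right_le_deriv_boundary
    (f := fun t => F t - F x₀) (fun t ht => (hF t ht).continuousWithinAt.sub continuousWithinAt_const)
    (fun t ht => ((hF t (Ico_subset_Icc_self ht)).mono_of_mem_nhdsWithin
      (Icc_mem_nhdsGE_of_mem ht)).sub_const _)
    (by simp) hboundary hderiv_le (right_mem_Icc.2 hx₀x)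
  simpa [F, taylorWithinEval_self, norm_sub_rev] using key

theorem taylorWithinEval_comp_neg (f : ℝ → E) (n : ℕ) (s : Set ℝ) (x₀ x : ℝ) :
    taylorWithinEval (fun y => f (-y)) n (-s) (-x₀) (-x) = taylorWithinEval f n s x₀ x := by
  simp only [taylor_within_apply, iteratedDerivWithin_comp_neg, neg_neg, smul_smul]
  refine Finset.sum_congr rfl fun k _ => ?_
  rw [show -x - -x₀ = -1 * (x - x₀) by ring, mul_pow]
  congr 1
  ring_nf
  simp

theorem norm_sub_taylorWithinEval_le {f : ℝ → E} {a b C x₀ x : ℝ} {n : ℕ} (hab : a < b)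
    (hf : ContDiffOn ℝ (n + 1) f (Icc a b)) (hx₀ : x₀ ∈ Icc a b) (hx : x ∈ Icc a b)
    (hC : ∀ y ∈ Icc a b, ‖iteratedDerivWithin (n + 1) f (Icc a b) y‖ ≤ C) :
    ‖f x - taylorWithinEval f n (Icc a b) x₀ x‖ ≤ C * |x - x₀| ^ (n + 1) / (n + 1)! := by
  rcases le_total x₀ x with h | h
  · rw [abs_of_nonneg (sub_nonneg.2 h)]
    exact norm_sub_taylorWithinEval_le_of_le hab hf hx₀.1 h hx.2 hC
  · have hneg : -Icc a b = Icc (-b) (-a) := neg_Icc a b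
    have hf_neg : ContDiffOn ℝ (n + 1) (fun y => f (-y)) (Icc (-b) (-a)) :=
      hf.comp contDiff_neg.contDiffOn fun _ => neg_mem_Icc_iff.2
    have hC_neg : ∀ y ∈ Icc (-b) (-a),
        ‖iteratedDerivWithin (n + 1) (fun y => f (-y)) (Icc (-b) (-a)) y‖ ≤ C := by
      intro y hy
      rw [iteratedDerivWithin_comp_neg, norm_smul, ← hneg, neg_neg]
      simpa using hC (-y) (neg_mem_Icc_iff.2 hy)
    have := norm_sub_taylorWithinEval_le_of_le (neg_lt_neg hab) hf_neg (neg_le_neg hx₀.2)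
      (neg_le_neg h) (neg_le_neg hx.1) hC_neg
    rwa [← hneg, taylorWithinEval_comp_neg, neg_neg, show -x - -x₀ = x₀ - x by ring,
      ← abs_of_nonneg (sub_nonneg.2 h), abs_sub_comm] at this

end Taylor

section Moments

variable {E ι : Type*} [NormedAddCommGroup E] [NormedSpace ℝ E] [Fintype ι]

theorem taylorWithinEval_add_sum_smul_eq_zero (f : ℝ → E) (n : ℕ) (s : Set ℝ) (c ν : ι → ℝ)
    (hmom : ∀ k ≤ n, ∑ j, c j * ν j ^ k = -1) (ρ : ℝ) :
    taylorWithinEval f n s 0 ρ + ∑ j, c j • taylorWithinEval f n s 0 (ν j * ρ) = 0 := by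
  simp only [taylor_within_apply, sub_zero, Finset.smul_sum, smul_smul]
  rw [Finset.sum_comm, ← Finset.sum_add_distrib]
  refine Finset.sum_eq_zero fun k hk => ?_
  rw [← Finset.sum_smul, ← add_smul]
  have hk : ∑ j, c j * ν j ^ k = -1 := hmom k (Nat.lt_succ_iff.1 (Finset.mem_range.1 hk))
  have hcoeff : (k ! : ℝ)⁻¹ * ρ ^ k + ∑ j, c j * ((k ! : ℝ)⁻¹ * (ν j * ρ) ^ k) = 0 := by
    have hfactor : ∑ j, c j * ((k ! : ℝ)⁻¹ * (ν j * ρ) ^ k)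
        = (k ! : ℝ)⁻¹ * ρ ^ k * ∑ j, c j * ν j ^ k := by
      rw [Finset.mul_sum]
      exact Finset.sum_congr rfl fun j _ => by ring
    rw [hfactor, hk]
    ring
  rw [hcoeff, zero_smul]

theorem norm_add_sum_smul_le_of_moments (f : ℝ → E) (n : ℕ) (s : Set ℝ) (c ν : ι → ℝ)
    (hmom : ∀ k ≤ n, ∑ j, c j * ν j ^ k = -1) (ρ : ℝ) :
    ‖f ρ + ∑ j, c j • f (ν j * ρ)‖ ≤ ‖f ρ - taylorWithinEval f n s 0 ρ‖
      + ∑ j, |c j| * ‖f (ν j * ρ) - taylorWithinEval f n s 0 (ν j * ρ)‖ := by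
  set P := taylorWithinEval f n s 0
  have hsplit : f ρ + ∑ j, c j • f (ν j * ρ)
      = (f ρ - P ρ) + ∑ j, c j • (f (ν j * ρ) - P (ν j * ρ)) := by
    simp only [smul_sub, Finset.sum_sub_distrib]
    linear_combination (norm := module) taylorWithinEval_add_sum_smul_eq_zero f n s c ν hmom ρ
  rw [hsplit]
  refine (norm_add_le _ _).trans (add_le_add_right ((norm_sum_le _ _).trans_eq ?_) _)
  simp only [norm_smul, Real.norm_eq_abs]

end Moments

theorem stmt14_general (m : ℕ) (a b : Fin m → ℝ)
    (hb : ∀ j, 0 < b j)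
    (hmom : ∀ k : ℕ, k ≤ 3 → ∑ j, a j * b j * (-(b j)) ^ k = -1)
    (B : ℝ) (hB : IsGreatest (Set.range b) B)
    (R K : ℝ) (hR : 0 < R)
    (ψ : ℝ → ℂ)
    (hψ : ContDiffOn ℝ 4 ψ (Icc (-(B * R)) R))
    (hψ4 : ∀ s ∈ Icc (-(B * R)) R, ‖iteratedDerivWithin 4 ψ (Icc (-(B * R)) R) s‖ ≤ K) :
    ∀ ρ ∈ Icc (0 : ℝ) R,
      ‖ψ ρ + ∑ j, ((a j * b j : ℝ) : ℂ) * ψ (-(b j) * ρ)‖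
        ≤ (1 / 24) * (1 + ∑ j, |a j| * b j ^ 5) * K * ρ ^ 4 := by
  rintro ρ ⟨hρ0, hρR⟩
  obtain ⟨⟨j₀, rfl⟩, hbB⟩ := hB
  have hBR : 0 ≤ b j₀ * R := mul_nonneg (hb j₀).le hR.le
  set T := Icc (-(b j₀ * R)) R
  have hremainder : ∀ x ∈ T, ‖ψ x - taylorWithinEval ψ 3 T 0 x‖ ≤ K * |x| ^ 4 / 24 := by
    intro x hx
    simpa [Nat.factorial] using
      norm_sub_taylorWithinEval_le (n := 3) (by linarith) hψ ⟨by linarith, hR.le⟩ hx hψ4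
  have hnode : ∀ j, -(b j) * ρ ∈ T := fun j =>
    ⟨by nlinarith [hbB ⟨j, rfl⟩, hb j], by nlinarith [hb j]⟩
  calc ‖ψ ρ + ∑ j, ((a j * b j : ℝ) : ℂ) * ψ (-(b j) * ρ)‖
      = ‖ψ ρ + ∑ j, (a j * b j) • ψ (-(b j) * ρ)‖ := by simp only [Complex.real_smul]
    _ ≤ ‖ψ ρ - taylorWithinEval ψ 3 T 0 ρ‖ + ∑ j, |a j * b j|
          * ‖ψ (-(b j) * ρ) - taylorWithinEval ψ 3 T 0 (-(b j) * ρ)‖ :=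
        norm_add_sum_smul_le_of_moments ψ 3 T _ _ hmom ρ
    _ ≤ K * |ρ| ^ 4 / 24 + ∑ j, |a j * b j| * (K * |-(b j) * ρ| ^ 4 / 24) := by
        gcongr with j
        · exact hremainder ρ ⟨by linarith, hρR⟩
        · exact hremainder _ (hnode j)
    _ = (1 / 24) * (1 + ∑ j, |a j| * b j ^ 5) * K * ρ ^ 4 := by
        simp only [abs_mul, abs_neg, abs_of_pos (hb _), abs_of_nonneg hρ0]
        rw [mul_add, add_mul, add_mul, Finset.mul_sum, Finset.sum_mul, Finset.sum_mul]
        congr 1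
        · ring
        · exact Finset.sum_congr rfl fun j _ => by ring

/-- Fourth-order Taylor cancellation: if `Σ_j a_j b_j (-b_j)^k = -1` for `k = 0,1,2,3` and
`ψ` is `C⁴` on `[-BR, R]` with `|ψ⁗| ≤ K`, then
`|ψ(ρ) + Σ_j a_j b_j ψ(-b_j ρ)| ≤ (1/24)(1 + Σ_j |a_j| b_j⁵) K ρ⁴` for `ρ ∈ [0,R]`. -/
theorem stmt14 (m : ℕ) (hm : 1 ≤ m) (a b : Fin m → ℝ)
    (hb : ∀ j, 0 < b j)
    (hmom : ∀ k : ℕ, k ≤ 3 → ∑ j, a j * b j * (-(b j)) ^ k = -1)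
    (B : ℝ) (hB : IsGreatest (Set.range b) B)
    (R K : ℝ) (hR : 0 < R) (hK : 0 ≤ K)
    (ψ : ℝ → ℂ)
    (hψ : ContDiffOn ℝ 4 ψ (Icc (-(B * R)) R))
    (hψ4 : ∀ s ∈ Icc (-(B * R)) R, ‖iteratedDerivWithin 4 ψ (Icc (-(B * R)) R) s‖ ≤ K) :
    ∀ ρ ∈ Icc (0 : ℝ) R,
      ‖ψ ρ + ∑ j, ((a j * b j : ℝ) : ℂ) * ψ (-(b j) * ρ)‖
        ≤ (1 / 24) * (1 + ∑ j, |a j| * b j ^ 5) * K * ρ ^ 4 :=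
  stmt14_general m a b hb hmom B hB R K hR ψ hψ hψ4
end

section
/- Identify ℂ with ℝ² and define the Wirtinger derivatives ∂_w = (1/2)(∂_x - i∂_y) and ∂_{w̄} = (1/2)(∂_x + i∂_y). For 0 < |w| < 1 let f(w) = w̄·(-log|w|)^{1/3}. Then f is real-differentiable on {0 < |w| < 1} and: (1) ∂_w f(w) = -(1/6)·(-log|w|)^{-2/3}·(w̄/w); (2) ∂_{w̄} f(w) = (-log|w|)^{1/3} - (1/6)·(-log|w|)^{-2/3}. In particular ∂_w f is bounded near w = 0 while ∂_{w̄} f(w) → ∞ as w → 0. -/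
/-!
Write `f(w) = w̄ · ψ(|w|)` with `ψ(r) = (-log r)^{1/3}`. The Wirtinger derivatives obey the
product rule, `∂_w w̄ = 0`, `∂_{w̄} w̄ = 1`, and a radial function `ψ(|w|)` has
`∂_w ψ(|w|) = ψ'(|w|) w̄ / (2|w|)`, `∂_{w̄} ψ(|w|) = ψ'(|w|) w / (2|w|)`.
Since `ψ'(r) = -(1/3)(-log r)^{-2/3} / r`, this gives both formulas. As `w → 0`,
`-log|w| → ∞`, so `|∂_w f| = (-log|w|)^{-2/3}/6 ≤ 1/6` eventually, while
`∂_{w̄} f ~ (-log|w|)^{1/3} → ∞`.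
-/

open Filter

/-- The Wirtinger derivative `∂_w = (1/2)(∂_x - i∂_y)`, expressed via the real Fréchet
derivative of a map `ℂ → ℂ`. -/
noncomputable def wirtDw (f : ℂ → ℂ) (w : ℂ) : ℂ :=
  (1 / 2 : ℂ) * (fderiv ℝ f w 1 - Complex.I * fderiv ℝ f w Complex.I)

/-- The Wirtinger derivative `∂_w̄ = (1/2)(∂_x + i∂_y)`. -/
noncomputable def wirtDwBar (f : ℂ → ℂ) (w : ℂ) : ℂ :=
  (1 / 2 : ℂ) * (fderiv ℝ f w 1 + Complex.I * fderiv ℝ f w Complex.I)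

/-- The function `f(w) = w̄·(-log|w|)^{1/3}`. -/
noncomputable def f15 (w : ℂ) : ℂ :=
  (starRingEnd ℂ) w * (((-Real.log (‖w‖)) ^ ((1 : ℝ) / 3) : ℝ) : ℂ)

open Complex ComplexConjugate Topology

theorem hasStrictFDerivAt_norm {E : Type*} [NormedAddCommGroup E] [InnerProductSpace ℝ E]
    {x : E} (hx : x ≠ 0) : HasStrictFDerivAt (‖·‖) (‖x‖⁻¹ • innerSL ℝ x) x := by
  have hsq := (Real.hasStrictDerivAt_sqrt (pow_ne_zero 2 (norm_ne_zero_iff.2 hx)))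
    |>.comp_hasStrictFDerivAt x (hasStrictFDerivAt_norm_sq x)
  simp only [Function.comp_def, Real.sqrt_sq (norm_nonneg _)] at hsq
  refine hsq.congr_fderiv (ContinuousLinearMap.ext fun y => ?_)
  simp only [smul_apply, coe_innerSL_apply, nsmul_eq_mul, Nat.cast_ofNat, smul_eq_mul]
  field_simp

theorem Real.hasDerivAt_neg_log_rpow {r p : ℝ} (hr : r ≠ 0) (hlog : Real.log r ≠ 0) :
    HasDerivAt (fun s => (-Real.log s) ^ p) (-(p * (-Real.log r) ^ (p - 1)) / r) r := by
  convert (Real.hasDerivAt_log hr).fun_neg.rpow_const (p := p) (Or.inl (neg_ne_zero.2 hlog))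
    using 1
  field_simp

theorem tendsto_rpow_sub_const_mul_rpow_atTop {p q : ℝ} (hp : 0 < p) (hq : q < 0) (c : ℝ) :
    Tendsto (fun x : ℝ => x ^ p - c * x ^ q) atTop atTop := by
  have hdecay : Tendsto (fun x : ℝ => c * x ^ q) atTop (𝓝 0) := by
    simpa using (tendsto_rpow_neg_atTop (neg_pos.2 hq)).const_mul c
  simpa [sub_eq_add_neg] using (tendsto_rpow_atTop hp).atTop_add hdecay.neg

theorem conj_eq_re_sub_im_mul_I (w : ℂ) : conj w = w.re - w.im * I := by
  simp [Complex.ext_iff]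

section Wirtinger

variable {f g : ℂ → ℂ} {w : ℂ}

theorem wirtDw_mul (hf : DifferentiableAt ℝ f w) (hg : DifferentiableAt ℝ g w) :
    wirtDw (fun z => f z * g z) w = f w * wirtDw g w + g w * wirtDw f w := by
  simp only [wirtDw, fderiv_fun_mul hf hg, add_apply, smul_apply, smul_eq_mul]
  ring

theorem wirtDwBar_mul (hf : DifferentiableAt ℝ f w) (hg : DifferentiableAt ℝ g w) :
    wirtDwBar (fun z => f z * g z) w = f w * wirtDwBar g w + g w * wirtDwBar f w := by
  simp only [wirtDwBar, fderiv_fun_mul hf hg, add_apply, smul_apply, smul_eq_mul]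
  ring

theorem hasFDerivAt_conj : HasFDerivAt (conj : ℂ → ℂ) (conjCLE : ℂ →L[ℝ] ℂ) w :=
  conjCLE.hasFDerivAt

theorem wirtDw_conj : wirtDw conj w = 0 := by
  simp [wirtDw, hasFDerivAt_conj.fderiv]

theorem wirtDwBar_conj : wirtDwBar conj w = 1 := by
  norm_num [wirtDwBar, hasFDerivAt_conj.fderiv]

variable {ψ : ℝ → ℝ} {ψ' : ℝ}

theorem HasDerivAt.hasFDerivAt_ofReal_comp_norm (hψ : HasDerivAt ψ ψ' ‖w‖) (hw : w ≠ 0) :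
    HasFDerivAt (fun z : ℂ => (ψ ‖z‖ : ℂ)) (ofRealCLM.comp (ψ' • ‖w‖⁻¹ • innerSL ℝ w)) w :=
  ofRealCLM.hasFDerivAt.comp w (hψ.comp_hasFDerivAt w (hasStrictFDerivAt_norm hw).hasFDerivAt)

theorem fderiv_ofReal_comp_norm_apply (hψ : HasDerivAt ψ ψ' ‖w‖) (hw : w ≠ 0) (z : ℂ) :
    fderiv ℝ (fun z : ℂ => (ψ ‖z‖ : ℂ)) w z
      = ((ψ' / ‖w‖ * (w.re * z.re + w.im * z.im) : ℝ) : ℂ) := by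
  rw [(hψ.hasFDerivAt_ofReal_comp_norm hw).fderiv]
  simp only [ContinuousLinearMap.comp_apply, smul_apply, coe_innerSL_apply, Complex.inner,
    ofRealCLM_apply, smul_eq_mul, mul_re, conj_re, conj_im]
  push_cast
  ring

theorem wirtDw_ofReal_comp_norm (hψ : HasDerivAt ψ ψ' ‖w‖) (hw : w ≠ 0) :
    wirtDw (fun z : ℂ => (ψ ‖z‖ : ℂ)) w = ((ψ' / (2 * ‖w‖) : ℝ) : ℂ) * conj w := by
  simp only [wirtDw, fderiv_ofReal_comp_norm_apply hψ hw, one_re, one_im, I_re, I_im,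
    conj_eq_re_sub_im_mul_I]
  push_cast
  ring

theorem wirtDwBar_ofReal_comp_norm (hψ : HasDerivAt ψ ψ' ‖w‖) (hw : w ≠ 0) :
    wirtDwBar (fun z : ℂ => (ψ ‖z‖ : ℂ)) w = ((ψ' / (2 * ‖w‖) : ℝ) : ℂ) * w := by
  simp only [wirtDwBar, fderiv_ofReal_comp_norm_apply hψ hw, one_re, one_im, I_re, I_im]
  push_cast
  linear_combination (ψ' / (2 * ‖w‖) : ℂ) * re_add_im w

end Wirtinger

theorem hasDerivAt_neg_log_rpow_one_third {r : ℝ} (h0 : 0 < r) (h1 : r < 1) :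
    HasDerivAt (fun s => (-Real.log s) ^ ((1 : ℝ) / 3))
      (-(1 / 3 * (-Real.log r) ^ (-(2 : ℝ) / 3)) / r) r := by
  convert Real.hasDerivAt_neg_log_rpow h0.ne' (Real.log_neg h0 h1).ne using 3
  norm_num

section f15

variable {w : ℂ}

theorem differentiableAt_f15 (h0 : 0 < ‖w‖) (h1 : ‖w‖ < 1) : DifferentiableAt ℝ f15 w :=
  hasFDerivAt_conj.differentiableAt.mul
    ((hasDerivAt_neg_log_rpow_one_third h0 h1).hasFDerivAt_ofReal_comp_norm
      (norm_pos_iff.1 h0)).differentiableAt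

theorem wirtDw_f15 (h0 : 0 < ‖w‖) (h1 : ‖w‖ < 1) :
    wirtDw f15 w
      = -(1 / 6 : ℂ) * (((-Real.log ‖w‖) ^ (-(2 : ℝ) / 3) : ℝ) : ℂ) * (conj w / w) := by
  have hψ := hasDerivAt_neg_log_rpow_one_third h0 h1
  have hw := norm_pos_iff.1 h0
  unfold f15
  rw [wirtDw_mul hasFDerivAt_conj.differentiableAt
      (hψ.hasFDerivAt_ofReal_comp_norm hw).differentiableAt,
    wirtDw_ofReal_comp_norm hψ hw, wirtDw_conj]
  have hnorm : (‖w‖ : ℂ) ≠ 0 := by exact_mod_cast h0.ne'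
  generalize (-Real.log ‖w‖) ^ (-(2 : ℝ) / 3) = K
  push_cast
  field_simp
  linear_combination (-6 * conj w * K) * mul_conj' w

theorem wirtDwBar_f15 (h0 : 0 < ‖w‖) (h1 : ‖w‖ < 1) :
    wirtDwBar f15 w = (((-Real.log ‖w‖) ^ ((1 : ℝ) / 3) : ℝ) : ℂ)
      - (1 / 6 : ℂ) * (((-Real.log ‖w‖) ^ (-(2 : ℝ) / 3) : ℝ) : ℂ) := by
  have hψ := hasDerivAt_neg_log_rpow_one_third h0 h1
  have hw := norm_pos_iff.1 h0
  unfold f15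
  rw [wirtDwBar_mul hasFDerivAt_conj.differentiableAt
      (hψ.hasFDerivAt_ofReal_comp_norm hw).differentiableAt,
    wirtDwBar_ofReal_comp_norm hψ hw, wirtDwBar_conj]
  have hnorm : (‖w‖ : ℂ) ≠ 0 := by exact_mod_cast h0.ne'
  generalize (-Real.log ‖w‖) ^ (-(2 : ℝ) / 3) = K
  push_cast
  field_simp
  linear_combination (-6 * (K : ℂ)) * conj_mul' w

theorem norm_wirtDw_f15 (h0 : 0 < ‖w‖) (h1 : ‖w‖ < 1) :
    ‖wirtDw f15 w‖ = 6⁻¹ * (-Real.log ‖w‖) ^ (-(2 : ℝ) / 3) := by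
  have hK : 0 ≤ (-Real.log ‖w‖) ^ (-(2 : ℝ) / 3) :=
    Real.rpow_nonneg (neg_nonneg.2 (Real.log_nonpos h0.le h1.le)) _
  simp [wirtDw_f15 h0 h1, abs_of_nonneg hK, h0.ne']

theorem norm_wirtDwBar_f15 (h0 : 0 < ‖w‖) (h1 : ‖w‖ < 1) :
    ‖wirtDwBar f15 w‖
      = |(-Real.log ‖w‖) ^ ((1 : ℝ) / 3) - 1 / 6 * (-Real.log ‖w‖) ^ (-(2 : ℝ) / 3)| := by
  rw [wirtDwBar_f15 h0 h1, ← Real.norm_eq_abs, ← Complex.norm_real]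
  push_cast
  rfl

end f15

/-- Wirtinger derivatives of `f(w) = w̄(-log|w|)^{1/3}` on `{0 < |w| < 1}`:
`∂_w f = -(1/6)(-log|w|)^{-2/3}·(w̄/w)` and
`∂_w̄ f = (-log|w|)^{1/3} - (1/6)(-log|w|)^{-2/3}`; in particular `∂_w f` is bounded
near `w = 0` while `∂_w̄ f → ∞` as `w → 0`. -/
theorem stmt15 :
    (∀ w : ℂ, 0 < ‖w‖ → ‖w‖ < 1 →
      DifferentiableAt ℝ f15 w ∧
      wirtDw f15 w
        = -(1 / 6 : ℂ) * (((-Real.log (‖w‖)) ^ (-(2 : ℝ) / 3) : ℝ) : ℂ)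
            * ((starRingEnd ℂ) w / w) ∧
      wirtDwBar f15 w
        = (((-Real.log (‖w‖)) ^ ((1 : ℝ) / 3) : ℝ) : ℂ)
            - (1 / 6 : ℂ) * (((-Real.log (‖w‖)) ^ (-(2 : ℝ) / 3) : ℝ) : ℂ)) ∧
    (∃ C : ℝ, ∀ᶠ w in nhdsWithin (0 : ℂ) {w : ℂ | w ≠ 0}, ‖wirtDw f15 w‖ ≤ C) ∧
    Tendsto (fun w : ℂ => ‖wirtDwBar f15 w‖) (nhdsWithin (0 : ℂ) {w : ℂ | w ≠ 0}) atTop := by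
  have hsmall : ∀ᶠ w : ℂ in 𝓝[≠] 0, 0 < ‖w‖ ∧ ‖w‖ < 1 :=
    tendsto_norm_nhdsNE_zero.eventually (Ioo_mem_nhdsGT one_pos)
  have hlog : Tendsto (fun w : ℂ => -Real.log ‖w‖) (𝓝[≠] 0) atTop :=
    tendsto_neg_atBot_atTop.comp (Real.tendsto_log_nhdsGT_zero.comp tendsto_norm_nhdsNE_zero)
  refine ⟨fun w h0 h1 => ⟨differentiableAt_f15 h0 h1, wirtDw_f15 h0 h1, wirtDwBar_f15 h0 h1⟩,
    ⟨6⁻¹, ?_⟩, ?_⟩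
  · filter_upwards [hsmall, hlog.eventually_ge_atTop 1] with w ⟨h0, h1⟩ hL
    rw [norm_wirtDw_f15 h0 h1]
    exact mul_le_of_le_one_right (by norm_num)
      (Real.rpow_le_one_of_one_le_of_nonpos hL (by norm_num))
  · refine (tendsto_abs_atTop_atTop.comp ((tendsto_rpow_sub_const_mul_rpow_atTop
      (p := 1 / 3) (q := -2 / 3) (by norm_num) (by norm_num) (1 / 6)).comp hlog)).congr' ?_
    filter_upwards [hsmall] with w ⟨h0, h1⟩
    exact (norm_wirtDwBar_f15 h0 h1).symm
end
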